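/- Let X be a topological space and p ≥ 0. Let O_p(X) ⊆ C_p(X) be the subgroup of the singular chain group generated by all elements gσ − sign(g)σ for singular p-simplices σ and permutations g ∈ S(p+1) (acting by affine permutation of vertices of the standard simplex), together with all σ fixed by some transposition. Then the boundary map ∂ of the singular chain complex satisfies ∂(O_p(X)) ⊆ O_{p−1}(X), i.e., O_*(X) is a subcomplex. -/
import Mathlib


open Finset BigOperators

/-- The standard topological `p`-simplex. -/
def StdSimplex (p : ℕ) : Type := { f : Fin (p + 1) → NNReal // ∑ i, f i = 1 }

instance (p : ℕ) : TopologicalSpace (StdSimplex p) :=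
  instTopologicalSpaceSubtype

/-- The affine map between standard simplices induced by a map on vertices. -/
noncomputable def affineMap {m n : ℕ} (v : Fin (m + 1) → Fin (n + 1)) :
    StdSimplex m → StdSimplex n := fun t =>
  ⟨fun j => ∑ k ∈ Finset.univ.filter (fun k => v k = j), t.1 k, by
    simpa [Finset.sum_fiberwise] using t.2⟩

theorem continuous_affineMap {m n : ℕ} (v : Fin (m + 1) → Fin (n + 1)) :
    Continuous (affineMap v) := by
  refine Continuous.subtype_mk (continuous_pi fun j => ?_) _
  exact continuous_finset_sum _ fun k _ => (continuous_apply _).comp continuous_subtype_val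

/-- The continuous affine map between standard simplices induced by a vertex map. -/
noncomputable def affineCM {m n : ℕ} (v : Fin (m + 1) → Fin (n + 1)) :
    C(StdSimplex m, StdSimplex n) := ⟨affineMap v, continuous_affineMap v⟩

variable (X : Type) [TopologicalSpace X]

/-- Singular `p`-simplices of `X`. -/
abbrev SingularSimplex (p : ℕ) := C(StdSimplex p, X)

/-- The integral singular chain group in degree `p`. -/
abbrev SChain (p : ℕ) := SingularSimplex X p →₀ ℤ

variable {X}

/-- The `i`-th face of a singular `(p+1)`-simplex. -/
noncomputable def face {p : ℕ} (i : Fin (p + 2)) (σ : SingularSimplex X (p + 1)) :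
    SingularSimplex X p := σ.comp (affineCM (Fin.succAbove i))

/-- The singular boundary map. -/
noncomputable def sBoundary (p : ℕ) : SChain X (p + 1) →+ SChain X p :=
  ∑ i : Fin (p + 2), (-1 : ℤ) ^ (i : ℕ) •
    (Finsupp.mapDomain.addMonoidHom (face i))

/-- The action of a permutation of the vertices on a singular `p`-simplex. -/
noncomputable def permSimplex {p : ℕ} (g : Equiv.Perm (Fin (p + 1)))
    (σ : SingularSimplex X p) : SingularSimplex X p := σ.comp (affineCM g)

/-- The subgroup `O_p(X)` of the singular chain group generated by
`gσ - sign(g)·σ` and by simplices fixed by a transposition. -/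
noncomputable def Osub (p : ℕ) : AddSubgroup (SChain X p) :=
  AddSubgroup.closure
    ({ c | ∃ (σ : SingularSimplex X p) (g : Equiv.Perm (Fin (p + 1))),
        c = Finsupp.single (permSimplex g σ) 1 -
          (Equiv.Perm.sign g : ℤ) • Finsupp.single σ 1 } ∪
     { c | ∃ (σ : SingularSimplex X p) (a b : Fin (p + 1)), a ≠ b ∧
        permSimplex (Equiv.swap a b) σ = σ ∧ c = Finsupp.single σ 1 })

/-- The ℓ¹-norm of an integral singular chain. -/
noncomputable def chainNorm (p : ℕ) (c : SChain X p) : ℤ :=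
  ∑ σ ∈ c.support, |c σ|



section Aux

open Equiv Equiv.Perm

/-- The permutation of `Fin (p+1)` induced by restricting `g` away from `i`. -/
noncomputable def permOfFace {p : ℕ} (g : Perm (Fin (p + 2))) (i : Fin (p + 2)) :
    Perm (Fin (p + 1)) :=
  (Equiv.Perm.decomposeFin (Fin.cycleRange (g i) * g * (Fin.cycleRange i)⁻¹)).2

lemma permOfFace_aux {p : ℕ} (g : Perm (Fin (p + 2))) (i : Fin (p + 2)) :
    Fin.cycleRange (g i) * g * (Fin.cycleRange i)⁻¹ =
      Equiv.Perm.decomposeFin.symm (0, permOfFace g i) := by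
  set G := Fin.cycleRange (g i) * g * (Fin.cycleRange i)⁻¹ with hG
  have h0 : G 0 = 0 := by
    have h1 : (Fin.cycleRange i)⁻¹ 0 = i := by simp [Equiv.Perm.inv_def]
    simp [hG, Perm.mul_apply, h1, Fin.cycleRange_self]
  have hsymm : Equiv.Perm.decomposeFin.symm (Equiv.Perm.decomposeFin G) = G :=
    Equiv.Perm.decomposeFin.symm_apply_apply G
  have h2 := DFunLike.congr_fun hsymm (0 : Fin (p + 2))
  rw [← Prod.mk.eta (p := Equiv.Perm.decomposeFin G),
    Equiv.Perm.decomposeFin_symm_apply_zero, h0] at h2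
  rw [Equiv.eq_symm_apply]
  exact Prod.ext h2 rfl

lemma permOfFace_vertex {p : ℕ} (g : Perm (Fin (p + 2))) (i : Fin (p + 2)) (j : Fin (p + 1)) :
    (g i).succAbove (permOfFace g i j) = g (i.succAbove j) := by
  have h := DFunLike.congr_fun (permOfFace_aux g i) j.succ
  simp only [Perm.mul_apply, Equiv.Perm.decomposeFin_symm_apply_succ, swap_self,
    Equiv.refl_apply] at h
  have h2 : ((Fin.cycleRange i)⁻¹ : Perm (Fin (p + 2))) j.succ = i.succAbove j :=
    Fin.cycleRange_symm_succ i j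
  rw [h2] at h
  have h3 := congrArg (Fin.cycleRange (g i)).symm h
  rw [Equiv.symm_apply_apply, Fin.cycleRange_symm_succ] at h3
  exact h3.symm

lemma sign_permOfFace {p : ℕ} (g : Perm (Fin (p + 2))) (i : Fin (p + 2)) :
    (Perm.sign (permOfFace g i) : ℤ) =
      (-1) ^ ((i : ℕ) + ((g i : ℕ))) * Perm.sign g := by
  have h := congrArg Perm.sign (permOfFace_aux g i)
  rw [Equiv.Perm.decomposeFin.symm_sign] at h
  simp only [map_mul, map_inv, Fin.sign_cycleRange] at h
  rw [if_pos trivial, one_mul] at h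
  have h2 : (Perm.sign (permOfFace g i) : ℤˣ) =
      (-1) ^ ((i : ℕ) + ((g i : ℕ))) * Perm.sign g := by
    rw [← h]
    have hu : ((-1 : ℤˣ) ^ (i : ℕ))⁻¹ = (-1) ^ (i : ℕ) := by simp
    rw [hu, pow_add]
    rw [mul_comm ((-1 : ℤˣ) ^ (i : ℕ)) _, mul_assoc, mul_comm (Perm.sign g)]
    rw [mul_assoc]
  rw [h2]; push_cast; ring

lemma affineCM_comp {l m n : ℕ} (v : Fin (m + 1) → Fin (n + 1)) (w : Fin (l + 1) → Fin (m + 1)) :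
    (affineCM v).comp (affineCM w) = affineCM (v ∘ w) := by
  ext t : 1
  simp only [ContinuousMap.comp_apply, affineCM, ContinuousMap.coe_mk]
  apply Subtype.ext
  funext j
  show ∑ k ∈ Finset.univ.filter (fun k => v k = j),
      (∑ l ∈ Finset.univ.filter (fun l' => w l' = k), t.1 l) = _
  rw [Finset.sum_fiberwise_eq_sum_filter Finset.univ (Finset.univ.filter (fun k => v k = j)) w t.1]
  show _ = ∑ k ∈ Finset.univ.filter (fun k => (v ∘ w) k = j), t.1 k
  apply Finset.sum_congr _ (fun _ _ => rfl)
  apply Finset.filter_congr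
  intro x _
  simp [Function.comp]

lemma face_permSimplex {X : Type} [TopologicalSpace X] {p : ℕ} (g : Perm (Fin (p + 2)))
    (i : Fin (p + 2)) (σ : SingularSimplex X (p + 1)) :
    face i (permSimplex g σ) = permSimplex (permOfFace g i) (face (g i) σ) := by
  show (σ.comp (affineCM ⇑g)).comp (affineCM (Fin.succAbove i)) =
    (σ.comp (affineCM (Fin.succAbove (g i)))).comp (affineCM ⇑(permOfFace g i))
  rw [ContinuousMap.comp_assoc, ContinuousMap.comp_assoc, affineCM_comp, affineCM_comp]
  congr 2
  funext j
  exact (permOfFace_vertex g i j).symm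

lemma sBoundary_single {X : Type} [TopologicalSpace X] {p : ℕ} (σ : SingularSimplex X (p + 1)) :
    sBoundary p (Finsupp.single σ (1 : ℤ)) =
      ∑ i : Fin (p + 2), (-1 : ℤ) ^ (i : ℕ) • Finsupp.single (face i σ) 1 := by
  rw [sBoundary, AddMonoidHom.finset_sum_apply]
  refine Finset.sum_congr rfl fun i _ => ?_
  rw [AddMonoidHom.smul_apply, Finsupp.mapDomain.addMonoidHom_apply, Finsupp.mapDomain_single]

lemma genA_mem {X : Type} [TopologicalSpace X] {p : ℕ} (g : Perm (Fin (p + 1)))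
    (σ : SingularSimplex X p) :
    Finsupp.single (permSimplex g σ) 1 - (Perm.sign g : ℤ) • Finsupp.single σ 1 ∈
      (Osub p : AddSubgroup (SChain X p)) :=
  AddSubgroup.subset_closure (Or.inl ⟨σ, g, rfl⟩)

lemma genB_mem {X : Type} [TopologicalSpace X] {p : ℕ} (σ : SingularSimplex X p)
    (a b : Fin (p + 1)) (hab : a ≠ b) (hfix : permSimplex (Equiv.swap a b) σ = σ) :
    Finsupp.single σ (1 : ℤ) ∈ (Osub p : AddSubgroup (SChain X p)) :=
  AddSubgroup.subset_closure (Or.inr ⟨σ, a, b, hab, hfix, rfl⟩)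

lemma neg_one_pow_sq (a : ℕ) : ((-1 : ℤ) ^ a) * ((-1 : ℤ) ^ a) = 1 := by
  rw [← pow_add, ← two_mul, pow_mul]; norm_num

end Aux

/-- The boundary map of the integral singular chain complex maps `O_{p+1}(X)` into
`O_p(X)`, i.e. the oriented subgroups `O_*(X)` form a subcomplex. -/
theorem sBoundary_mem_Osub {X : Type} [TopologicalSpace X] (p : ℕ)
    (c : SChain X (p + 1)) (hc : c ∈ Osub (p + 1)) :
    sBoundary p c ∈ (Osub p : AddSubgroup (SChain X p)) := by
  have hle : (Osub (p + 1) : AddSubgroup (SChain X (p + 1))) ≤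
      AddSubgroup.comap (sBoundary p) (Osub p) := by
    rw [Osub, AddSubgroup.closure_le]
    rintro c (⟨σ, g, rfl⟩ | ⟨σ, a, b, hab, hfix, rfl⟩)
    · show sBoundary p _ ∈ Osub p
      rw [map_sub, map_zsmul, sBoundary_single, sBoundary_single]
      have e1 : ∀ i : Fin (p + 2),
          Finsupp.single (face i (permSimplex g σ)) (1 : ℤ) =
            Finsupp.single (permSimplex (permOfFace g i) (face (g i) σ)) 1 := fun i => by
        rw [face_permSimplex]
      have reindex : ∑ i : Fin (p + 2), ((-1 : ℤ) ^ (i : ℕ)) • Finsupp.single (face i σ) (1 : ℤ)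
          = ∑ i : Fin (p + 2),
              ((-1 : ℤ) ^ ((g i : ℕ))) • Finsupp.single (face (g i) σ) (1 : ℤ) :=
        (Equiv.sum_comp g
          (fun j => ((-1 : ℤ) ^ ((j : ℕ))) • Finsupp.single (face j σ) (1 : ℤ))).symm
      have e2 : (Equiv.Perm.sign g : ℤ) • ∑ i : Fin (p + 2), (-1 : ℤ) ^ (i : ℕ) •
            Finsupp.single (face i σ) (1 : ℤ) =
          ∑ i : Fin (p + 2), (-1 : ℤ) ^ (i : ℕ) •
            ((Equiv.Perm.sign (permOfFace g i) : ℤ) •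
              Finsupp.single (face (g i) σ) (1 : ℤ)) := by
        rw [reindex, Finset.smul_sum]
        refine Finset.sum_congr rfl fun i _ => ?_
        rw [smul_smul, smul_smul, sign_permOfFace]
        congr 1
        rw [pow_add]
        linear_combination (-((Equiv.Perm.sign g : ℤ)) * (-1 : ℤ) ^ ((g i : ℕ))) *
          neg_one_pow_sq (i : ℕ)
      rw [e2]
      rw [show (∑ i : Fin (p + 2), (-1 : ℤ) ^ (i : ℕ) •
            Finsupp.single (face i (permSimplex g σ)) (1 : ℤ)) =
          ∑ i : Fin (p + 2), (-1 : ℤ) ^ (i : ℕ) •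
            Finsupp.single (permSimplex (permOfFace g i) (face (g i) σ)) (1 : ℤ) from
        Finset.sum_congr rfl fun i _ => by rw [e1]]
      rw [← Finset.sum_sub_distrib]
      refine AddSubgroup.sum_mem _ fun i _ => ?_
      rw [← smul_sub]
      exact AddSubgroup.zsmul_mem _ (genA_mem _ _) _
    · show sBoundary p _ ∈ Osub p
      rw [sBoundary_single]
      set f : Fin (p + 2) → SChain X p := fun i =>
        (-1 : ℤ) ^ (i : ℕ) • Finsupp.single (face i σ) (1 : ℤ) with hf
      have hb' : b ∈ Finset.univ.erase a := Finset.mem_erase.mpr ⟨hab.symm, Finset.mem_univ b⟩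
      rw [← Finset.add_sum_erase _ f (Finset.mem_univ a), ← Finset.add_sum_erase _ f hb']
      have hpair : f a + f b ∈ (Osub p : AddSubgroup (SChain X p)) := by
        have hfa : face a σ = permSimplex (permOfFace (Equiv.swap a b) a) (face b σ) := by
          conv_lhs => rw [← hfix]
          rw [face_permSimplex, Equiv.swap_apply_left]
        have hsgn : (Equiv.Perm.sign (permOfFace (Equiv.swap a b) a) : ℤ) =
            (-1) ^ ((a : ℕ) + (b : ℕ)) * (-1) := by
          rw [sign_permOfFace, Equiv.swap_apply_left, Equiv.Perm.sign_swap hab]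
          push_cast; ring
        have hkey : f a + f b = (-1 : ℤ) ^ (a : ℕ) •
            (Finsupp.single (permSimplex (permOfFace (Equiv.swap a b) a) (face b σ)) 1 -
              (Equiv.Perm.sign (permOfFace (Equiv.swap a b) a) : ℤ) •
                Finsupp.single (face b σ) 1) := by
          rw [smul_sub, ← hfa, smul_smul, hsgn, hf]
          have hc : (-1 : ℤ) ^ (a : ℕ) * ((-1) ^ ((a : ℕ) + (b : ℕ)) * (-1)) =
              -((-1 : ℤ) ^ (b : ℕ)) := by
            rw [pow_add]
            linear_combination (-((-1 : ℤ) ^ (b : ℕ))) * neg_one_pow_sq (a : ℕ)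
          rw [hc, neg_smul, sub_neg_eq_add]
        rw [hkey]
        exact AddSubgroup.zsmul_mem _ (genA_mem _ _) _
      rw [← add_assoc]
      refine AddSubgroup.add_mem _ hpair (AddSubgroup.sum_mem _ fun i hi => ?_)
      have hib : i ≠ b := (Finset.mem_erase.mp hi).1
      have hia : i ≠ a := (Finset.mem_erase.mp (Finset.mem_erase.mp hi).2).1
      obtain ⟨a₀, ha₀⟩ := Fin.exists_succAbove_eq (Ne.symm hia)
      obtain ⟨b₀, hb₀⟩ := Fin.exists_succAbove_eq (Ne.symm hib)
      have hne : a₀ ≠ b₀ := by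
        rintro rfl; exact hab (ha₀ ▸ hb₀ ▸ rfl)
      have hswapi : Equiv.swap a b i = i :=
        Equiv.swap_apply_of_ne_of_ne hia hib
      have hswap : permOfFace (Equiv.swap a b) i = Equiv.swap a₀ b₀ := by
        refine Equiv.ext fun j => ?_
        apply Fin.succAbove_right_injective (p := i)
        have hv := permOfFace_vertex (Equiv.swap a b) i j
        rw [hswapi] at hv
        rw [hv]
        rcases eq_or_ne j a₀ with rfl | hja
        · rw [ha₀, Equiv.swap_apply_left, Equiv.swap_apply_left, hb₀]
        · rcases eq_or_ne j b₀ with rfl | hjb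
          · rw [hb₀, Equiv.swap_apply_right, Equiv.swap_apply_right, ha₀]
          · rw [Equiv.swap_apply_of_ne_of_ne hja hjb,
              Equiv.swap_apply_of_ne_of_ne
                (fun h => hja (Fin.succAbove_right_injective (ha₀ ▸ h)))
                (fun h => hjb (Fin.succAbove_right_injective (hb₀ ▸ h)))]
      have hfixi : permSimplex (Equiv.swap a₀ b₀) (face i σ) = face i σ := by
        rw [← hswap]
        calc permSimplex (permOfFace (Equiv.swap a b) i) (face i σ)
            = permSimplex (permOfFace (Equiv.swap a b) i) (face (Equiv.swap a b i) σ) := by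
              rw [hswapi]
          _ = face i (permSimplex (Equiv.swap a b) σ) := (face_permSimplex _ _ _).symm
          _ = face i σ := by rw [hfix]
      exact AddSubgroup.zsmul_mem _ (genB_mem _ _ _ hne hfixi) _
  exact hle hc
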